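/- arXiv:2401.07713 — 8 statements merged into one kernel-verified Lean document; each statement's English description precedes it below -/
import Mathlib

section
/- Let 0 < λ < 1 be real and d ≥ 2 an integer. Then there is exactly one mean-field fixed point q. Moreover this fixed point satisfies q(0) = 1 − λ and, writing q̄ = ∑_{x≥1} x·q(x), it is given explicitly by q(x) = (1−λ)·(dλ)^x / ∏_{ℓ=1}^{x} (1 + λ(d−1)ℓ/q̄) for every x ≥ 1, where q̄ is the unique s ∈ (0,∞) satisfying λ/(1−λ) = ∑_{x≥1} (dλ)^x / ∏_{ℓ=1}^{x} (1 + λ(d−1)ℓ/s). -/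
open scoped BigOperators

/-- The mean queue length `q̄ = ∑_{x≥1} x·q(x)`. -/
noncomputable def qbar (q : ℕ → ℝ) : ℝ := ∑' x : ℕ, (x : ℝ) * q x

/-- `q : ℕ → ℝ` is admissible: nonnegative, sums to one, and the mean queue
length is finite and positive. -/
def Admissible (q : ℕ → ℝ) : Prop :=
  (∀ x, 0 ≤ q x) ∧ Summable q ∧ (∑' x, q x = 1) ∧
    Summable (fun x : ℕ => (x : ℝ) * q x) ∧ 0 < qbar q

/-- The mean-field drift `D(x)` for `x ≥ 1`. -/
noncomputable def drift (lam : ℝ) (d : ℕ) (q : ℕ → ℝ) (x : ℕ) : ℝ :=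
  (d : ℝ) * lam * (q (x - 1) - q x) + q (x + 1) - q x +
    (1 - q 0) * ((d : ℝ) - 1) / qbar q *
      (((x : ℝ) + 1) * q (x + 1) - (x : ℝ) * q x)

/-- A mean-field fixed point is an admissible `q` with vanishing drift. -/
def IsMFFixedPoint (lam : ℝ) (d : ℕ) (q : ℕ → ℝ) : Prop :=
  Admissible q ∧ ∀ x : ℕ, 1 ≤ x → drift lam d q x = 0

/-! Write `a = dλ`, `b = λ(d - 1)` and `c = (1 - q(0))(d - 1)/q̄`. The drift at `x + 1` is the
difference `B(x + 1) - B(x)` of the flux `B(x) = q(x + 1)(1 + c(x + 1)) - a q(x)`, so at a fixed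
point the flux is constant, and it vanishes because `B(x) → 0`. Summing `B(x) = 0` over `x` gives
`(1 - q(0)) d = dλ`, hence `q(0) = 1 - λ` and `c = b/q̄`, and the recursion
`q(x + 1)(1 + b(x + 1)/q̄) = a q(x)` solves to the product formula. Then `∑ q = 1` says exactly
`Φ(q̄) = λ/(1 - λ)` for `Φ(s) = ∑_{x ≥ 1} a^x / ∏_{l ≤ x} (1 + b l/s)`. On `(0, ∞)` the map `Φ` is
continuous and strictly increasing, is below `e^{as/b} - 1` (so small near `0`) and tends termwise
to `∑ a^x` (which exceeds `λ/(1 - λ)` as `a > λ`), so it takes the value `λ/(1 - λ)` exactly once;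
conversely, the product profile at that root is a fixed point. -/

open Filter Topology Finset
open scoped Nat

namespace MeanField

noncomputable def weight (a b s : ℝ) (x : ℕ) : ℝ := a ^ x / ∏ l ∈ Icc 1 x, (1 + b * l / s)

noncomputable def tailSum (a b s : ℝ) : ℝ := ∑' x : ℕ, weight a b s (x + 1)

def flux (a c : ℝ) (q : ℕ → ℝ) (k : ℕ) : ℝ := q (k + 1) * (1 + c * (k + 1)) - a * q k

section Weight

variable {a b s : ℝ}

lemma weight_zero : weight a b s 0 = 1 := by simp [weight]

lemma weight_nonneg (ha : 0 ≤ a) (hb : 0 ≤ b) (hs : 0 < s) (x : ℕ) : 0 ≤ weight a b s x := by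
  unfold weight; positivity

lemma flux_weight (hb : 0 ≤ b) (hs : 0 < s) (x : ℕ) :
    flux a (b / s) (weight a b s) x = 0 := by
  have : 0 < ∏ l ∈ Icc 1 x, (1 + b * l / s) := prod_pos fun l _ => by positivity
  rw [flux, weight, weight, prod_Icc_succ_top (by omega), pow_succ]
  push_cast
  field_simp
  ring

lemma succ_mul_weight_succ_le (ha : 0 ≤ a) (hb : 0 < b) (hs : 0 < s) (x : ℕ) :
    (x + 1) * weight a b s (x + 1) ≤ a * s / b * weight a b s x := by
  have h := flux_weight (a := a) hb.le hs x
  have hw := weight_nonneg ha hb.le hs (x + 1)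
  rw [flux] at h
  rw [div_mul_eq_mul_div, le_div_iff₀ hb]
  field_simp at h
  nlinarith [mul_nonneg hs.le hw]

lemma weight_le_pow_div_factorial (ha : 0 ≤ a) (hb : 0 < b) (hs : 0 < s) (x : ℕ) :
    weight a b s x ≤ (a * s / b) ^ x / x ! := by
  induction x with
  | zero => simp [weight_zero]
  | succ x ih =>
    have h := succ_mul_weight_succ_le ha hb hs x
    rw [pow_succ, Nat.factorial_succ, Nat.cast_mul, le_div_iff₀ (by positivity)]
    push_cast
    rw [le_div_iff₀ (by positivity)] at ih
    nlinarith [show 0 ≤ a * s / b by positivity]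

lemma summable_weight (ha : 0 ≤ a) (hb : 0 < b) (hs : 0 < s) : Summable (weight a b s) :=
  .of_nonneg_of_le (weight_nonneg ha hb.le hs) (weight_le_pow_div_factorial ha hb hs)
    (Real.summable_pow_div_factorial _)

lemma summable_mul_weight (ha : 0 ≤ a) (hb : 0 < b) (hs : 0 < s) :
    Summable fun x : ℕ => (x : ℝ) * weight a b s x := by
  rw [← summable_nat_add_iff 1]
  refine .of_nonneg_of_le (fun x => ?_) (fun x => ?_)
    ((summable_weight ha hb hs).mul_left (a * s / b))
  · have := weight_nonneg ha hb.le hs (x + 1); positivity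
  · push_cast; exact succ_mul_weight_succ_le ha hb hs x

lemma weight_le_weight (ha : 0 ≤ a) (hb : 0 ≤ b) (hs : 0 < s) {t : ℝ} (hst : s ≤ t) (x : ℕ) :
    weight a b s x ≤ weight a b t x := by
  have ht : 0 < t := hs.trans_le hst
  unfold weight
  gcongr with l

lemma tailSum_strictMonoOn (ha : 0 < a) (hb : 0 < b) :
    StrictMonoOn (tailSum a b) (Set.Ioi 0) := by
  intro s hs t ht hst
  refine Summable.tsum_lt_tsum (i := 0) (fun x => weight_le_weight ha.le hb.le hs hst.le _) ?_
    ((summable_nat_add_iff 1).2 (summable_weight ha.le hb hs))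
    ((summable_nat_add_iff 1).2 (summable_weight ha.le hb ht))
  have hs : (0 : ℝ) < s := hs
  have ht : (0 : ℝ) < t := ht
  simp only [weight, zero_add, pow_one, Icc_self, prod_singleton, Nat.cast_one, mul_one]
  gcongr

lemma continuousOn_weight (hb : 0 ≤ b) (x : ℕ) :
    ContinuousOn (fun s => weight a b s x) (Set.Ioi 0) := by
  refine continuousOn_const.div (continuousOn_finsetProd _ fun l _ => ?_) fun s hs => ?_
  · exact continuousOn_const.add (continuousOn_const.div continuousOn_id fun s hs => ne_of_gt hs)
  · have hs : (0 : ℝ) < s := hs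
    exact (prod_pos fun l _ => by positivity).ne'

lemma continuousOn_tailSum (ha : 0 ≤ a) (hb : 0 < b) :
    ContinuousOn (tailSum a b) (Set.Ioi 0) := by
  intro s (hs : 0 < s)
  have hIcc : ContinuousOn (tailSum a b) (Set.Icc (s / 2) (2 * s)) :=
    continuousOn_tsum (fun x => (continuousOn_weight hb.le _).mono fun t ht => by
        simp only [Set.mem_Ioi]; linarith [ht.1])
      ((summable_nat_add_iff 1).2 (summable_weight ha hb (by positivity : 0 < 2 * s)))
      fun x t ht => by
        rw [Real.norm_of_nonneg (weight_nonneg ha hb.le (by linarith [ht.1]) _)]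
        exact weight_le_weight ha hb.le (by linarith [ht.1]) ht.2 _
  exact (hIcc.continuousAt (Icc_mem_nhds (by linarith) (by linarith))).continuousWithinAt

lemma tailSum_le_exp_sub_one (ha : 0 ≤ a) (hb : 0 < b) (hs : 0 < s) :
    tailSum a b s ≤ Real.exp (a * s / b) - 1 := by
  have hexp := (hasSum_nat_add_iff' 1).2 (NormedSpace.expSeries_div_hasSum_exp (a * s / b))
  simp only [range_one, sum_singleton, pow_zero, Nat.factorial_zero, Nat.cast_one, div_one,
    ← Real.exp_eq_exp_ℝ] at hexp
  exact hasSum_le (fun x => weight_le_pow_div_factorial ha hb hs _)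
    ((summable_nat_add_iff 1).2 (summable_weight ha hb hs)).hasSum hexp

lemma exists_tailSum_lt (ha : 0 ≤ a) (hb : 0 < b) {t : ℝ} (ht : 0 < t) :
    ∃ s, 0 < s ∧ tailSum a b s < t := by
  have hlim : Tendsto (fun s => Real.exp (a * s / b) - 1) (𝓝[>] 0) (𝓝 0) := by
    have : Continuous fun s => Real.exp (a * s / b) - 1 := by fun_prop
    simpa using (this.tendsto 0).mono_left nhdsWithin_le_nhds
  obtain ⟨s, hlt, hs⟩ := ((hlim.eventually (gt_mem_nhds ht)).and self_mem_nhdsWithin).exists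
  exact ⟨s, hs, (tailSum_le_exp_sub_one ha hb hs).trans_lt hlt⟩

lemma tendsto_weight_atTop (x : ℕ) : Tendsto (fun s => weight a b s x) atTop (𝓝 (a ^ x)) := by
  have hfactor (l : ℕ) : Tendsto (fun s : ℝ => 1 + b * l / s) atTop (𝓝 1) := by
    simpa using tendsto_const_nhds.add ((tendsto_const_nhds (x := b * l)).div_atTop tendsto_id)
  have hprod := tendsto_finsetProd (Icc 1 x) fun l _ => hfactor l
  rw [prod_const_one] at hprod
  have := (tendsto_const_nhds (x := a ^ x)).div hprod one_ne_zero
  rwa [div_one] at this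

lemma exists_lt_tailSum (ha : 0 ≤ a) (hb : 0 < b) {t : ℝ} {N : ℕ}
    (ht : t < ∑ x ∈ range N, a ^ (x + 1)) : ∃ s, 0 < s ∧ t < tailSum a b s := by
  have hlim :=
    tendsto_finsetSum (range N) fun x _ => tendsto_weight_atTop (a := a) (b := b) (x + 1)
  obtain ⟨s, hts, hs⟩ := ((hlim.eventually (lt_mem_nhds ht)).and (eventually_gt_atTop 0)).exists
  exact ⟨s, hs, hts.trans_le (Summable.sum_le_tsum _ (fun x _ => weight_nonneg ha hb.le hs _)
    ((summable_nat_add_iff 1).2 (summable_weight ha hb hs)))⟩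

lemma exists_tailSum_eq (ha : 0 ≤ a) (hb : 0 < b) {t : ℝ} {N : ℕ} (ht : 0 < t)
    (htN : t < ∑ x ∈ range N, a ^ (x + 1)) : ∃ s, 0 < s ∧ tailSum a b s = t := by
  obtain ⟨s₀, hs₀, h₀⟩ := exists_tailSum_lt ha hb ht
  obtain ⟨s₁, hs₁, h₁⟩ := exists_lt_tailSum ha hb htN
  exact isPreconnected_Ioi.intermediate_value hs₀ hs₁ (continuousOn_tailSum ha hb) ⟨h₀.le, h₁.le⟩

end Weight

lemma exists_div_one_sub_lt_sum_range_pow_succ {lam a : ℝ} (hlam0 : 0 ≤ lam) (hlam1 : lam < 1)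
    (hlama : lam < a) : ∃ N, lam / (1 - lam) < ∑ x ∈ range N, a ^ (x + 1) := by
  have hgeom := ((hasSum_geometric_of_lt_one hlam0 hlam1).mul_left a).tendsto_sum_nat
  have hlt : lam / (1 - lam) < a * (1 - lam)⁻¹ := by
    rw [← div_eq_mul_inv]; exact div_lt_div_of_pos_right hlama (by linarith)
  obtain ⟨N, hN⟩ := (hgeom.eventually (lt_mem_nhds hlt)).exists
  refine ⟨N, hN.trans_le (sum_le_sum fun x _ => ?_)⟩
  rw [pow_succ']
  gcongr
  linarith

section Balance

variable {a c : ℝ} {q : ℕ → ℝ}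

lemma tendsto_flux_atTop (hq : Summable q) (hxq : Summable fun x : ℕ => (x : ℝ) * q x) :
    Tendsto (flux a c q) atTop (𝓝 0) := by
  have h₁ := hq.tendsto_atTop_zero
  have h₂ := hxq.tendsto_atTop_zero
  have h := ((h₁.comp (tendsto_add_atTop_nat 1)).add
    ((h₂.comp (tendsto_add_atTop_nat 1)).const_mul c)).sub (h₁.const_mul a)
  simp only [mul_zero, add_zero, sub_zero] at h
  refine h.congr fun k => ?_
  simp only [Function.comp_apply, flux]
  push_cast
  ring

lemma flux_eq_zero_of_succ_eq (hq : Summable q) (hxq : Summable fun x : ℕ => (x : ℝ) * q x)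
    (h : ∀ k, flux a c q (k + 1) = flux a c q k) (k : ℕ) : flux a c q k = 0 := by
  have hconst : ∀ k, flux a c q k = flux a c q 0 := fun k => by
    induction k with
    | zero => rfl
    | succ k ih => exact (h k).trans ih
  rw [hconst]
  exact tendsto_nhds_unique (tendsto_const_nhds.congr fun k => (hconst k).symm)
    (tendsto_flux_atTop hq hxq)

lemma tsum_sub_add_mul_qbar_of_flux (hq : Summable q)
    (hxq : Summable fun x : ℕ => (x : ℝ) * q x) (h : ∀ k, flux a c q k = 0) :
    ∑' x, q x - q 0 + c * qbar q = a * ∑' x, q x := by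
  have hshift := (hasSum_nat_add_iff' 1).2 hq.hasSum
  have hxshift := (hasSum_nat_add_iff' 1).2 hxq.hasSum
  simp only [range_one, sum_singleton, Nat.cast_zero, zero_mul, sub_zero] at hshift hxshift
  have hsum := (hshift.add (hxshift.mul_left c)).sub (hq.hasSum.mul_left a)
  have hfun : (fun k : ℕ => q (k + 1) + c * (((k + 1 : ℕ) : ℝ) * q (k + 1)) - a * q k) =
      flux a c q := funext fun k => by simp only [flux]; push_cast; ring
  rw [hfun, funext h] at hsum
  rw [qbar]
  linarith [hsum.unique hasSum_zero]

lemma eq_mul_weight_of_flux {b s : ℝ} (hb : 0 ≤ b) (hs : 0 < s)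
    (h : ∀ k, flux a (b / s) q k = 0) (x : ℕ) : q x = q 0 * weight a b s x := by
  induction x with
  | zero => rw [weight_zero, mul_one]
  | succ x ih =>
    have hfactor : 1 + b / s * (x + 1) ≠ 0 := by positivity
    refine mul_right_cancel₀ hfactor ?_
    have hq := h x
    have hw := flux_weight (a := a) hb hs x
    rw [flux] at hq hw
    linear_combination hq - q 0 * hw + a * ih

end Balance

lemma drift_succ (lam : ℝ) (d : ℕ) (q : ℕ → ℝ) (k : ℕ) :
    drift lam d q (k + 1) =
      flux (d * lam) ((1 - q 0) * ((d : ℝ) - 1) / qbar q) q (k + 1) -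
        flux (d * lam) ((1 - q 0) * ((d : ℝ) - 1) / qbar q) q k := by
  simp only [drift, flux, Nat.add_sub_cancel]
  push_cast
  ring

noncomputable def profile (lam : ℝ) (d : ℕ) (s : ℝ) (x : ℕ) : ℝ :=
  (1 - lam) * weight (d * lam) (lam * ((d : ℝ) - 1)) s x

section Profile

variable {lam s : ℝ} {d : ℕ}

lemma profile_zero : profile lam d s 0 = 1 - lam := by simp [profile, weight_zero]

lemma flux_profile (hlam0 : 0 ≤ lam) (hd : 1 ≤ d) (hs : 0 < s) (k : ℕ) :
    flux (d * lam) (lam * ((d : ℝ) - 1) / s) (profile lam d s) k = 0 := by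
  have hb : 0 ≤ lam * ((d : ℝ) - 1) := mul_nonneg hlam0 (sub_nonneg.2 (by exact_mod_cast hd))
  have h := flux_weight (a := d * lam) hb hs k
  simp only [flux, profile] at h ⊢
  linear_combination (1 - lam) * h

variable (hlam0 : 0 < lam) (hd : 1 < d) (hs : 0 < s)
include hlam0 hd hs

omit hs in
lemma weight_params_pos : 0 ≤ (d : ℝ) * lam ∧ 0 < lam * ((d : ℝ) - 1) :=
  ⟨by positivity, mul_pos hlam0 (sub_pos.2 (by exact_mod_cast hd))⟩

lemma summable_profile : Summable (profile lam d s) :=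
  have ⟨ha, hb⟩ := weight_params_pos hlam0 hd
  (summable_weight ha hb hs).mul_left _

lemma summable_mul_profile : Summable fun x : ℕ => (x : ℝ) * profile lam d s x := by
  obtain ⟨ha, hb⟩ := weight_params_pos hlam0 hd
  simpa only [profile, mul_left_comm] using (summable_mul_weight ha hb hs).mul_left (1 - lam)

variable (hlam1 : lam < 1) (hroot : tailSum (d * lam) (lam * ((d : ℝ) - 1)) s = lam / (1 - lam))
include hlam1 hroot

lemma tsum_profile : ∑' x, profile lam d s x = 1 := by
  obtain ⟨ha, hb⟩ := weight_params_pos hlam0 hd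
  have hw := summable_weight ha hb hs
  rw [tailSum] at hroot
  simp only [profile]
  rw [tsum_mul_left, hw.tsum_eq_zero_add, weight_zero, hroot]
  field_simp [(sub_pos.2 hlam1).ne']
  ring

lemma qbar_profile : qbar (profile lam d s) = s := by
  have h := tsum_sub_add_mul_qbar_of_flux (summable_profile hlam0 hd hs)
    (summable_mul_profile hlam0 hd hs) (flux_profile hlam0.le hd.le hs)
  rw [tsum_profile hlam0 hd hs hlam1 hroot, profile_zero] at h
  have hb := (weight_params_pos hlam0 hd).2
  field_simp at h
  nlinarith

lemma isMFFixedPoint_profile : IsMFFixedPoint lam d (profile lam d s) := by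
  have hqbar := qbar_profile hlam0 hd hs hlam1 hroot
  refine ⟨⟨fun x => ?_, summable_profile hlam0 hd hs, tsum_profile hlam0 hd hs hlam1 hroot,
    summable_mul_profile hlam0 hd hs, hqbar.symm ▸ hs⟩, fun x hx => ?_⟩
  · obtain ⟨ha, hb⟩ := weight_params_pos hlam0 hd
    exact mul_nonneg (sub_pos.2 hlam1).le (weight_nonneg ha hb.le hs x)
  · obtain ⟨k, rfl⟩ : ∃ k, x = k + 1 := ⟨x - 1, by omega⟩
    have hc : (1 - profile lam d s 0) * ((d : ℝ) - 1) / qbar (profile lam d s) =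
        lam * ((d : ℝ) - 1) / s := by
      rw [profile_zero, hqbar]; ring
    rw [drift_succ, hc, flux_profile hlam0.le hd.le hs, flux_profile hlam0.le hd.le hs,
      sub_zero]

end Profile

end MeanField

open MeanField

namespace IsMFFixedPoint

variable {lam : ℝ} {d : ℕ} {q : ℕ → ℝ} (hq : IsMFFixedPoint lam d q)
include hq

lemma flux_eq_zero (k : ℕ) :
    flux (d * lam) ((1 - q 0) * ((d : ℝ) - 1) / qbar q) q k = 0 := by
  obtain ⟨⟨-, hsum, -, hxsum, -⟩, hdrift⟩ := hq
  exact flux_eq_zero_of_succ_eq hsum hxsum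
    (fun k => by linarith [drift_succ lam d q k, hdrift (k + 1) (by omega)]) k

lemma apply_zero (hd : 0 < d) : q 0 = 1 - lam := by
  have h := tsum_sub_add_mul_qbar_of_flux hq.1.2.1 hq.1.2.2.2.1 hq.flux_eq_zero
  rw [hq.1.2.2.1, div_mul_cancel₀ _ hq.1.2.2.2.2.ne'] at h
  have hd' : (d : ℝ) ≠ 0 := by positivity
  refine mul_right_cancel₀ hd' ?_
  linear_combination -h

lemma eq_profile (hlam0 : 0 ≤ lam) (hd : 1 ≤ d) : q = profile lam d (qbar q) := by
  have hb : 0 ≤ lam * ((d : ℝ) - 1) := mul_nonneg hlam0 (sub_nonneg.2 (by exact_mod_cast hd))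
  have hc : (1 - q 0) * ((d : ℝ) - 1) / qbar q = lam * ((d : ℝ) - 1) / qbar q := by
    rw [hq.apply_zero hd]; ring
  have hbal : ∀ k, flux (d * lam) (lam * ((d : ℝ) - 1) / qbar q) q k = 0 :=
    hc ▸ hq.flux_eq_zero
  funext x
  rw [profile, eq_mul_weight_of_flux hb hq.1.2.2.2.2 hbal x, hq.apply_zero hd]

lemma tailSum_qbar (hlam0 : 0 ≤ lam) (hlam1 : lam < 1) (hd : 1 ≤ d) :
    tailSum (d * lam) (lam * ((d : ℝ) - 1)) (qbar q) = lam / (1 - lam) := by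
  have h := hq.1.2.1.tsum_eq_zero_add
  rw [hq.1.2.2.1, hq.apply_zero hd,
    tsum_congr fun k => congrFun (hq.eq_profile hlam0 hd) (k + 1)] at h
  simp only [profile, tsum_mul_left] at h
  rw [tailSum, eq_div_iff (by linarith)]
  linarith

end IsMFFixedPoint

theorem mean_field_fixed_point_unique_and_explicit
    (lam : ℝ) (hlam0 : 0 < lam) (hlam1 : lam < 1) (d : ℕ) (hd : 2 ≤ d) :
    (∃! q : ℕ → ℝ, IsMFFixedPoint lam d q) ∧
    ∀ q : ℕ → ℝ, IsMFFixedPoint lam d q →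
      q 0 = 1 - lam ∧
      (∀ x : ℕ, 1 ≤ x →
        q x = (1 - lam) * ((d : ℝ) * lam) ^ x /
          ∏ l ∈ Finset.Icc 1 x, (1 + lam * ((d : ℝ) - 1) * (l : ℝ) / qbar q)) ∧
      0 < qbar q ∧
      lam / (1 - lam) =
        (∑' x : ℕ, ((d : ℝ) * lam) ^ (x + 1) /
          ∏ l ∈ Finset.Icc 1 (x + 1), (1 + lam * ((d : ℝ) - 1) * (l : ℝ) / qbar q)) ∧
      ∀ s : ℝ, 0 < s →
        lam / (1 - lam) =
          (∑' x : ℕ, ((d : ℝ) * lam) ^ (x + 1) /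
            ∏ l ∈ Finset.Icc 1 (x + 1), (1 + lam * ((d : ℝ) - 1) * (l : ℝ) / s)) →
        s = qbar q := by
  have ha : 0 < (d : ℝ) * lam := by positivity
  have hb : 0 < lam * ((d : ℝ) - 1) := mul_pos hlam0 (sub_pos.2 (by exact_mod_cast hd))
  obtain ⟨N, hN⟩ := exists_div_one_sub_lt_sum_range_pow_succ hlam0.le hlam1
    (show lam < d * lam by nlinarith)
  obtain ⟨s, hs, hroot⟩ := exists_tailSum_eq ha.le hb (div_pos hlam0 (sub_pos.2 hlam1)) hN
  have hroot_unique : ∀ t, 0 < t → tailSum (d * lam) (lam * ((d : ℝ) - 1)) t = lam / (1 - lam) →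
      t = s := fun t ht h => (tailSum_strictMonoOn ha hb).injOn ht hs (h.trans hroot.symm)
  have hqbar : ∀ q, IsMFFixedPoint lam d q → qbar q = s := fun q hq =>
    hroot_unique _ hq.1.2.2.2.2 (hq.tailSum_qbar hlam0.le hlam1 (by omega))
  refine ⟨⟨profile lam d s, isMFFixedPoint_profile hlam0 hd hs hlam1 hroot, fun q hq => ?_⟩,
    fun q hq => ⟨hq.apply_zero (by omega), fun x _ => ?_, hq.1.2.2.2.2,
      (hq.tailSum_qbar hlam0.le hlam1 (by omega)).symm,
      fun t ht htroot => (hroot_unique t ht htroot.symm).trans (hqbar q hq).symm⟩⟩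
  · rw [hq.eq_profile hlam0.le (by omega), hqbar q hq]
  · rw [congrFun (hq.eq_profile hlam0.le (by omega)) x, profile, weight, mul_div_assoc]
end

section
/- Let 0 < λ < 1 be real, d ≥ 2 an integer, and q admissible. Then for every z ≥ 1 the series ∑_{x≥z} D(x) converges absolutely and ∑_{x≥z} D(x) = dλ·q(z−1) − q(z) − ((1 − q(0))·(d−1)/q̄)·z·q(z). In particular, if q is a mean-field fixed point then q(z)·(1 + (1 − q(0))·(d−1)·z/q̄) = dλ·q(z−1) for every z ≥ 1. -/
/-!
The drift is a discrete divergence: `D(x) = Φ(x) - Φ(x + 1)` for the potential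
`Φ(x) = dλ·q(x - 1) - q(x) - c·x·q(x)`, where `c = (1 - q(0))(d - 1)/q̄`. Since `q` and
`x ↦ x·q(x)` are summable, so is `Φ`, and the tail sum of `D` from `z` telescopes to `Φ(z)`.
At a fixed point that tail sum vanishes, which is the recursion `Φ(z) = 0`.
-/

open scoped BigOperators

theorem Summable.hasSum_sub_succ {G : Type*} [AddCommGroup G] [TopologicalSpace G]
    [IsTopologicalAddGroup G] {g : ℕ → G} (hg : Summable g) :
    HasSum (fun n => g n - g (n + 1)) (g 0) := by
  simpa using hg.hasSum.sub ((hasSum_nat_add_iff' 1).2 hg.hasSum)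

noncomputable def driftPotential (lam : ℝ) (d : ℕ) (q : ℕ → ℝ) (x : ℕ) : ℝ :=
  (d : ℝ) * lam * q (x - 1) - q x - (1 - q 0) * ((d : ℝ) - 1) / qbar q * (x : ℝ) * q x

section DriftPotential

variable {lam : ℝ} {d : ℕ} {q : ℕ → ℝ}

-- Holds also at `x = 0`, where the truncated `0 - 1 = 0` appears on both sides.
theorem drift_eq_driftPotential_sub_succ (x : ℕ) :
    drift lam d q x = driftPotential lam d q x - driftPotential lam d q (x + 1) := by
  simp only [drift, driftPotential, Nat.add_sub_cancel]
  push_cast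
  ring

theorem summable_driftPotential (hq : Summable q)
    (hxq : Summable fun x : ℕ => (x : ℝ) * q x) : Summable (driftPotential lam d q) := by
  have hq_pred : Summable fun x => q (x - 1) :=
    (summable_nat_add_iff 1).1 (by simpa only [Nat.add_sub_cancel] using hq)
  refine ((hq_pred.mul_left _).sub hq).sub ?_
  exact (hxq.mul_left ((1 - q 0) * ((d : ℝ) - 1) / qbar q)).congr fun x => by ring

theorem hasSum_drift_tail (hq : Summable q) (hxq : Summable fun x : ℕ => (x : ℝ) * q x)
    (z : ℕ) : HasSum (fun n => drift lam d q (z + n)) (driftPotential lam d q z) := by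
  have hshift : Summable fun n => driftPotential lam d q (z + n) :=
    ((summable_nat_add_iff z).2 (summable_driftPotential hq hxq)).congr
      fun n => by rw [add_comm]
  simpa only [drift_eq_driftPotential_sub_succ, add_zero, add_assoc] using
    hshift.hasSum_sub_succ

theorem IsMFFixedPoint.driftPotential_eq_zero (h : IsMFFixedPoint lam d q) {z : ℕ}
    (hz : 1 ≤ z) : driftPotential lam d q z = 0 := by
  obtain ⟨⟨-, hq, -, hxq, -⟩, hfix⟩ := h
  refine (hasSum_drift_tail hq hxq z).unique ?_
  simpa only [fun n => hfix (z + n) (by omega)] using hasSum_zero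

end DriftPotential

theorem tail_sum_of_drift_general
    (lam : ℝ) (d : ℕ)
    (q : ℕ → ℝ) (hq : Admissible q) :
    (∀ z : ℕ, 1 ≤ z →
      Summable (fun n : ℕ => |drift lam d q (z + n)|) ∧
      (∑' n : ℕ, drift lam d q (z + n)) =
        (d : ℝ) * lam * q (z - 1) - q z -
          (1 - q 0) * ((d : ℝ) - 1) / qbar q * (z : ℝ) * q z) ∧
    (IsMFFixedPoint lam d q →
      ∀ z : ℕ, 1 ≤ z →
        q z * (1 + (1 - q 0) * ((d : ℝ) - 1) * (z : ℝ) / qbar q) =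
          (d : ℝ) * lam * q (z - 1)) := by
  obtain ⟨-, hsum, -, hxq, -⟩ := hq
  refine ⟨fun z _ => ?_, fun hfix z hz => ?_⟩
  · have htail := hasSum_drift_tail (lam := lam) (d := d) hsum hxq z
    exact ⟨htail.summable.abs, htail.tsum_eq⟩
  · have hpot := hfix.driftPotential_eq_zero hz
    unfold driftPotential at hpot
    linear_combination -hpot

theorem tail_sum_of_drift
    (lam : ℝ) (hlam0 : 0 < lam) (hlam1 : lam < 1) (d : ℕ) (hd : 2 ≤ d)
    (q : ℕ → ℝ) (hq : Admissible q) :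
    (∀ z : ℕ, 1 ≤ z →
      Summable (fun n : ℕ => |drift lam d q (z + n)|) ∧
      (∑' n : ℕ, drift lam d q (z + n)) =
        (d : ℝ) * lam * q (z - 1) - q z -
          (1 - q 0) * ((d : ℝ) - 1) / qbar q * (z : ℝ) * q z) ∧
    (IsMFFixedPoint lam d q →
      ∀ z : ℕ, 1 ≤ z →
        q z * (1 + (1 - q 0) * ((d : ℝ) - 1) * (z : ℝ) / qbar q) =
          (d : ℝ) * lam * q (z - 1)) :=
  tail_sum_of_drift_general lam d q hq
end

section
/- Let 0 < λ < 1 be real and d ≥ 2 an integer. Every mean-field fixed point q satisfies q(0) = 1 − λ. -/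
/-!
The drift at level `x + 1` is a difference `F x - F (x + 1)` of the net probability flux
`F x = levelFlux lam d q x` between levels `x` and `x + 1`. At a fixed point the flux is therefore
constant in `x`, and since it is summable it vanishes identically. Summing `F = 0` over all levels, the arrival term contributes
`dλ`, and the two departure terms contribute `1 - q 0` and `(1 - q 0)(d - 1)`; hence
`dλ = d (1 - q 0)`.
-/

open scoped BigOperators

theorem Summable.eq_zero_of_forall_succ_eq {G : Type*} [AddCommGroup G] [TopologicalSpace G]
    [IsTopologicalAddGroup G] [T2Space G] {g : ℕ → G} (hg : Summable g)
    (hstep : ∀ n, g (n + 1) = g n) (n : ℕ) : g n = 0 := by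
  have hconst : g = fun _ => g 0 := funext fun n => by
    induction n with
    | zero => rfl
    | succ n ih => rw [hstep, ih]
  rw [hconst] at hg ⊢
  exact (summable_const_iff (g 0)).1 hg

noncomputable def levelFlux (lam : ℝ) (d : ℕ) (q : ℕ → ℝ) (x : ℕ) : ℝ :=
  d * lam * q x - q (x + 1) - (1 - q 0) * ((d : ℝ) - 1) / qbar q * ((x + 1) * q (x + 1))

theorem drift_succ (lam : ℝ) (d : ℕ) (q : ℕ → ℝ) (x : ℕ) :
    drift lam d q (x + 1) = levelFlux lam d q x - levelFlux lam d q (x + 1) := by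
  simp only [drift, levelFlux, Nat.add_sub_cancel]
  push_cast
  ring

namespace Admissible

variable {q : ℕ → ℝ} (hq : Admissible q)
include hq

theorem summable_shift : Summable fun x => q (x + 1) :=
  (summable_nat_add_iff 1).2 hq.2.1

theorem tsum_shift : ∑' x, q (x + 1) = 1 - q 0 := by
  have h := hq.2.1.tsum_eq_zero_add
  rw [hq.2.2.1] at h
  linarith

theorem summable_succ_mul_shift : Summable fun x : ℕ => ((x : ℝ) + 1) * q (x + 1) := by
  have h := (summable_nat_add_iff (f := fun x : ℕ => (x : ℝ) * q x) 1).2 hq.2.2.2.1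
  exact_mod_cast h

theorem tsum_succ_mul_shift : ∑' x : ℕ, ((x : ℝ) + 1) * q (x + 1) = qbar q := by
  have h := hq.2.2.2.1.tsum_eq_zero_add
  simp only [Nat.cast_zero, zero_mul, zero_add, Nat.cast_add, Nat.cast_one] at h
  rw [qbar, h]

theorem summable_levelFlux (lam : ℝ) (d : ℕ) : Summable (levelFlux lam d q) :=
  ((hq.2.1.mul_left _).sub hq.summable_shift).sub (hq.summable_succ_mul_shift.mul_left _)

theorem tsum_levelFlux (lam : ℝ) (d : ℕ) :
    ∑' x, levelFlux lam d q x = d * lam - d * (1 - q 0) := by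
  unfold levelFlux
  rw [((hq.2.1.mul_left _).sub hq.summable_shift).tsum_sub (hq.summable_succ_mul_shift.mul_left _),
    (hq.2.1.mul_left _).tsum_sub hq.summable_shift, tsum_mul_left, tsum_mul_left, hq.2.2.1,
    hq.tsum_shift, hq.tsum_succ_mul_shift, div_mul_cancel₀ _ hq.2.2.2.2.ne']
  ring

end Admissible

theorem IsMFFixedPoint.levelFlux_eq_zero {lam : ℝ} {d : ℕ} {q : ℕ → ℝ}
    (hq : IsMFFixedPoint lam d q) (x : ℕ) : levelFlux lam d q x = 0 := by
  refine (hq.1.summable_levelFlux lam d).eq_zero_of_forall_succ_eq (fun n => ?_) x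
  have h := drift_succ lam d q n
  rw [hq.2 (n + 1) n.succ_pos] at h
  linarith

theorem fixed_point_q_zero_general
    (lam : ℝ) (d : ℕ) (hd : 2 ≤ d)
    (q : ℕ → ℝ) (hq : IsMFFixedPoint lam d q) :
    q 0 = 1 - lam := by
  have hsum := hq.1.tsum_levelFlux lam d
  rw [funext hq.levelFlux_eq_zero, tsum_zero, ← mul_sub] at hsum
  have hd0 : (d : ℝ) ≠ 0 := by positivity
  have := (mul_eq_zero.1 hsum.symm).resolve_left hd0
  linarith

theorem fixed_point_q_zero
    (lam : ℝ) (hlam0 : 0 < lam) (hlam1 : lam < 1) (d : ℕ) (hd : 2 ≤ d)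
    (q : ℕ → ℝ) (hq : IsMFFixedPoint lam d q) :
    q 0 = 1 - lam :=
  fixed_point_q_zero_general lam d hd q hq
end

section
/- Let 0 < λ < 1 be real, d ≥ 2 an integer, and q admissible with finite second moment ∑_{x≥1} x²·q(x) < ∞. Then the series ∑_{x≥1} x·D(x) converges absolutely and ∑_{x≥1} x·D(x) = d·(λ − (1 − q(0))). Consequently, if q is a mean-field fixed point, then q(0) = 1 − λ. -/
open scoped BigOperators

/-!
Weighted summation by parts: if `a` and `x·a(x)` are summable, then
`∑_{x≥1} x·(a(x-1) - a(x)) = ∑_{x≥0} a(x)` and `∑_{x≥1} x·(a(x+1) - a(x)) = -∑_{x≥1} a(x)`.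
The drift is a combination of three such differences: of `q` backwards, of `q` forwards, and of
`x·q(x)` forwards (this is where the second moment enters). Their weighted sums are `dλ`,
`-(1 - q(0))` and `-(1 - q(0))(d - 1)/q̄ · q̄`, adding up to `d(λ - (1 - q(0)))`. At a fixed point
every term vanishes, so `q(0) = 1 - λ` as `d ≠ 0`.
-/

section SummationByParts

variable {R : Type*} [Ring R] [TopologicalSpace R] [IsTopologicalRing R] {a : ℕ → R} {s m : R}

theorem HasSum.comp_succ (h : HasSum a s) : HasSum (fun n ↦ a (n + 1)) (s - a 0) := by
  simpa using (hasSum_nat_add_iff' 1).mpr h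

theorem HasSum.succ_mul_comp_succ (h : HasSum (fun n : ℕ ↦ (n : R) * a n) m) :
    HasSum (fun n : ℕ ↦ ((n : R) + 1) * a (n + 1)) m := by
  simpa using h.comp_succ

theorem hasSum_succ_mul_sub_succ (ha : HasSum a s)
    (hma : HasSum (fun n : ℕ ↦ (n : R) * a n) m) :
    HasSum (fun n : ℕ ↦ ((n : R) + 1) * (a n - a (n + 1))) s := by
  have h := (hma.add ha).sub hma.succ_mul_comp_succ
  rw [add_sub_cancel_left] at h
  exact h.congr_fun fun n ↦ by rw [mul_sub, add_one_mul]

theorem hasSum_succ_mul_succ_sub_succ (ha : HasSum a s)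
    (hma : HasSum (fun n : ℕ ↦ (n : R) * a n) m) :
    HasSum (fun n : ℕ ↦ ((n : R) + 1) * (a (n + 2) - a (n + 1))) (a 0 - s) := by
  have hb : HasSum (fun n : ℕ ↦ (n : R) * a (n + 1)) (m - (s - a 0)) :=
    (hma.succ_mul_comp_succ.sub ha.comp_succ).congr_fun fun n ↦ by
      rw [add_one_mul, add_sub_cancel_right]
  have h := (hasSum_succ_mul_sub_succ ha.comp_succ hb).neg
  rw [neg_sub] at h
  exact h.congr_fun fun n ↦ by rw [← mul_neg, neg_sub]

end SummationByParts

theorem hasSum_succ_mul_drift_succ (lam : ℝ) (d : ℕ) (q : ℕ → ℝ) (hq : Admissible q)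
    (hsecond : Summable (fun x : ℕ => (x : ℝ) ^ 2 * q x)) :
    HasSum (fun x : ℕ ↦ ((x : ℝ) + 1) * drift lam d q (x + 1)) (d * (lam - (1 - q 0))) := by
  obtain ⟨-, hsum, hone, hmean, hbar⟩ := hq
  have h0 : HasSum q 1 := hone ▸ hsum.hasSum
  have h1 : HasSum (fun n : ℕ ↦ (n : ℝ) * q n) (qbar q) := hmean.hasSum
  have h2 : HasSum (fun n : ℕ ↦ (n : ℝ) * ((n : ℝ) * q n))
      (∑' n : ℕ, (n : ℝ) ^ 2 * q n) := by
    simpa only [sq, mul_assoc] using hsecond.hasSum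
  have h := (((hasSum_succ_mul_sub_succ h0 h1).mul_left (d * lam)).add
    (hasSum_succ_mul_succ_sub_succ h0 h1)).add
    ((hasSum_succ_mul_succ_sub_succ h1 h2).mul_left ((1 - q 0) * (d - 1) / qbar q))
  have hval : d * lam * 1 + (q 0 - 1) +
      (1 - q 0) * (d - 1) / qbar q * (((0 : ℕ) : ℝ) * q 0 - qbar q) = d * (lam - (1 - q 0)) := by
    rw [Nat.cast_zero, zero_mul, zero_sub]
    field_simp
    ring
  rw [hval] at h
  refine h.congr_fun fun x ↦ ?_
  simp only [drift, Nat.add_sub_cancel]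
  push_cast
  ring

theorem first_moment_of_drift_general
    (lam : ℝ) (d : ℕ) (hd : 2 ≤ d)
    (q : ℕ → ℝ) (hq : Admissible q)
    (hsecond : Summable (fun x : ℕ => (x : ℝ) ^ 2 * q x)) :
    Summable (fun x : ℕ => |((x : ℝ) + 1) * drift lam d q (x + 1)|) ∧
    (∑' x : ℕ, ((x : ℝ) + 1) * drift lam d q (x + 1)) =
      (d : ℝ) * (lam - (1 - q 0)) ∧
    (IsMFFixedPoint lam d q → q 0 = 1 - lam) := by
  have h := hasSum_succ_mul_drift_succ lam d q hq hsecond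
  refine ⟨summable_abs_iff.mpr h.summable, h.tsum_eq, fun hfix ↦ ?_⟩
  have hterms : (fun x : ℕ ↦ ((x : ℝ) + 1) * drift lam d q (x + 1)) = 0 :=
    funext fun x ↦ by simp [hfix.2 (x + 1) (Nat.le_add_left 1 x)]
  have hzero : (d : ℝ) * (lam - (1 - q 0)) = 0 := h.unique (hterms ▸ hasSum_zero)
  have hd0 : (d : ℝ) ≠ 0 := by exact_mod_cast (by omega : d ≠ 0)
  linarith [(mul_eq_zero.mp hzero).resolve_left hd0]

theorem first_moment_of_drift
    (lam : ℝ) (hlam0 : 0 < lam) (hlam1 : lam < 1) (d : ℕ) (hd : 2 ≤ d)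
    (q : ℕ → ℝ) (hq : Admissible q)
    (hsecond : Summable (fun x : ℕ => (x : ℝ) ^ 2 * q x)) :
    Summable (fun x : ℕ => |((x : ℝ) + 1) * drift lam d q (x + 1)|) ∧
    (∑' x : ℕ, ((x : ℝ) + 1) * drift lam d q (x + 1)) =
      (d : ℝ) * (lam - (1 - q 0)) ∧
    (IsMFFixedPoint lam d q → q 0 = 1 - lam) :=
  first_moment_of_drift_general lam d hd q hq hsecond
end

section
/- Let 0 < λ < 1 be real and d ≥ 2 an integer. For s > 0 the series F(s) := ∑_{x≥1} (dλ)^x / ∏_{ℓ=1}^{x} (1 + λ(d−1)ℓ/s) converges; the function F is strictly monotone increasing on (0,∞); and F(s) tends to 0 as s tends to 0 from the right. -/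
open scoped BigOperators

/-- `F(s) = ∑_{x≥1} (dλ)^x / ∏_{ℓ=1}^x (1 + λ(d−1)ℓ/s)`. -/
noncomputable def F (lam : ℝ) (d : ℕ) (s : ℝ) : ℝ :=
  ∑' x : ℕ, ((d : ℝ) * lam) ^ (x + 1) /
    ∏ l ∈ Finset.Icc 1 (x + 1), (1 + lam * ((d : ℝ) - 1) * (l : ℝ) / s)

/-!
With `c = λ(d - 1) > 0`, the bound `1 + cℓ/s ≥ cℓ/s` makes the `x`-th term at most
`(dλs/c)^x / x!`, so the series is dominated by `exp (dλs/c) - 1`; this gives summability and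
the limit `0` as `s → 0⁺`. Every factor `1 + cℓ/s` decreases in `s`, strictly since `c > 0`, so
every term increases with `s` and the first one strictly.
-/

open Finset Filter Topology
open scoped Nat

/-- `F lam d s = ∑' n, summand (d * lam) (lam * (d - 1)) s (n + 1)` holds by `rfl`. -/
noncomputable def summand (a c s : ℝ) (n : ℕ) : ℝ :=
  a ^ n / ∏ l ∈ Icc 1 n, (1 + c * l / s)

section
variable {a c s t : ℝ}

lemma prod_Icc_natCast_eq_factorial (n : ℕ) : ∏ l ∈ Icc 1 n, (l : ℝ) = n ! := by
  rw [← Nat.cast_prod, ← Ico_add_one_right_eq_Icc, prod_Ico_id_eq_factorial]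

lemma prod_one_add_mul_div_pos (hc : 0 ≤ c) (hs : 0 < s) (n : ℕ) :
    0 < ∏ l ∈ Icc 1 n, (1 + c * l / s) :=
  prod_pos fun l _ => by positivity

lemma div_pow_mul_factorial_le_prod (hc : 0 ≤ c) (hs : 0 < s) (n : ℕ) :
    (c / s) ^ n * n ! ≤ ∏ l ∈ Icc 1 n, (1 + c * l / s) :=
  calc (c / s) ^ n * n ! = ∏ l ∈ Icc 1 n, c * l / s := by
        simp_rw [mul_div_right_comm c, prod_mul_distrib, prod_const, Nat.card_Icc,
          prod_Icc_natCast_eq_factorial, Nat.add_sub_cancel]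
    _ ≤ ∏ l ∈ Icc 1 n, (1 + c * l / s) :=
        prod_le_prod (fun l _ => by positivity) fun l _ => by linarith

lemma summand_nonneg (ha : 0 ≤ a) (hc : 0 ≤ c) (hs : 0 < s) (n : ℕ) : 0 ≤ summand a c s n :=
  div_nonneg (pow_nonneg ha n) (prod_one_add_mul_div_pos hc hs n).le

lemma summand_le_pow_div_factorial (ha : 0 ≤ a) (hc : 0 < c) (hs : 0 < s) (n : ℕ) :
    summand a c s n ≤ (a * s / c) ^ n / n ! :=
  calc summand a c s n ≤ a ^ n / ((c / s) ^ n * n !) :=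
        div_le_div_of_nonneg_left (by positivity) (by positivity)
          (div_pow_mul_factorial_le_prod hc.le hs n)
    _ = (a * s / c) ^ n / n ! := by
        rw [div_pow, div_pow, mul_pow]
        field_simp

lemma summable_summand (ha : 0 ≤ a) (hc : 0 < c) (hs : 0 < s) :
    Summable fun n => summand a c s (n + 1) :=
  ((summable_nat_add_iff 1).mpr (Real.summable_pow_div_factorial (a * s / c))).of_nonneg_of_le
    (fun n => summand_nonneg ha hc.le hs (n + 1))
    fun n => summand_le_pow_div_factorial ha hc hs (n + 1)

lemma hasSum_pow_succ_div_factorial (x : ℝ) :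
    HasSum (fun n => x ^ (n + 1) / (n + 1)!) (Real.exp x - 1) := by
  have := (hasSum_nat_add_iff' 1).mpr (Real.exp_eq_exp_ℝ ▸ NormedSpace.expSeries_div_hasSum_exp x)
  simpa using this

lemma tsum_summand_le_exp_sub_one (ha : 0 ≤ a) (hc : 0 < c) (hs : 0 < s) :
    ∑' n, summand a c s (n + 1) ≤ Real.exp (a * s / c) - 1 :=
  hasSum_le (fun n => summand_le_pow_div_factorial ha hc hs (n + 1))
    (summable_summand ha hc hs).hasSum (hasSum_pow_succ_div_factorial _)

lemma summand_le_summand (ha : 0 ≤ a) (hc : 0 ≤ c) (hs : 0 < s) (hst : s ≤ t) (n : ℕ) :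
    summand a c s n ≤ summand a c t n := by
  have ht : 0 < t := hs.trans_le hst
  refine div_le_div_of_nonneg_left (by positivity) (prod_one_add_mul_div_pos hc ht n) ?_
  exact prod_le_prod (fun l _ => by positivity) fun l _ => by gcongr

lemma summand_one_lt_summand_one (ha : 0 < a) (hc : 0 < c) (hs : 0 < s) (hst : s < t) :
    summand a c s 1 < summand a c t 1 := by
  have ht : 0 < t := hs.trans hst
  simp only [summand, pow_one, Icc_self, prod_singleton, Nat.cast_one, mul_one]
  gcongr

lemma strictMonoOn_tsum_summand (ha : 0 < a) (hc : 0 < c) :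
    StrictMonoOn (fun s => ∑' n, summand a c s (n + 1)) (Set.Ioi 0) := fun _ hs _ ht hst =>
  Summable.tsum_lt_tsum (fun n => summand_le_summand ha.le hc.le hs hst.le (n + 1))
    (summand_one_lt_summand_one ha hc hs hst) (summable_summand ha.le hc hs)
    (summable_summand ha.le hc ht)

lemma tendsto_tsum_summand_zero (ha : 0 ≤ a) (hc : 0 < c) :
    Tendsto (fun s => ∑' n, summand a c s (n + 1)) (𝓝[>] 0) (𝓝 0) := by
  have hexp : Tendsto (fun s => Real.exp (a * s / c) - 1) (𝓝 0) (𝓝 0) :=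
    (by fun_prop : Continuous fun s => Real.exp (a * s / c) - 1).tendsto' 0 0 (by simp)
  refine squeeze_zero' ?_ ?_ (hexp.mono_left nhdsWithin_le_nhds)
  · filter_upwards [self_mem_nhdsWithin] with s hs
    exact tsum_nonneg fun n => summand_nonneg ha hc.le hs (n + 1)
  · filter_upwards [self_mem_nhdsWithin] with s hs
    exact tsum_summand_le_exp_sub_one ha hc hs

end

theorem F_summable_strictMono_tendsto_zero_general
    (lam : ℝ) (hlam0 : 0 < lam) (d : ℕ) (hd : 2 ≤ d) :
    (∀ s : ℝ, 0 < s →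
      Summable (fun x : ℕ => ((d : ℝ) * lam) ^ (x + 1) /
        ∏ l ∈ Finset.Icc 1 (x + 1), (1 + lam * ((d : ℝ) - 1) * (l : ℝ) / s))) ∧
    StrictMonoOn (F lam d) (Set.Ioi 0) ∧
    Filter.Tendsto (F lam d) (nhdsWithin 0 (Set.Ioi 0)) (nhds 0) := by
  have ha : 0 < (d : ℝ) * lam := by positivity
  have hc : 0 < lam * ((d : ℝ) - 1) := by
    have : (2 : ℝ) ≤ d := by exact_mod_cast hd
    exact mul_pos hlam0 (by linarith)
  exact ⟨fun s hs => summable_summand ha.le hc hs, strictMonoOn_tsum_summand ha hc,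
    tendsto_tsum_summand_zero ha.le hc⟩

theorem F_summable_strictMono_tendsto_zero
    (lam : ℝ) (hlam0 : 0 < lam) (hlam1 : lam < 1) (d : ℕ) (hd : 2 ≤ d) :
    (∀ s : ℝ, 0 < s →
      Summable (fun x : ℕ => ((d : ℝ) * lam) ^ (x + 1) /
        ∏ l ∈ Finset.Icc 1 (x + 1), (1 + lam * ((d : ℝ) - 1) * (l : ℝ) / s))) ∧
    StrictMonoOn (F lam d) (Set.Ioi 0) ∧
    Filter.Tendsto (F lam d) (nhdsWithin 0 (Set.Ioi 0)) (nhds 0) :=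
  F_summable_strictMono_tendsto_zero_general lam hlam0 d hd
end

section
/- Let 0 < λ < 1 be real and d ≥ 2 an integer. There exists a unique s ∈ (0,∞) such that F(s) = λ/(1−λ). -/
/-!
On `s > 0` the series `F(s)` converges (its terms are dominated by `(dλs/c)^x / x!` with
`c = λ(d-1)`), is continuous, and is strictly increasing because every factor `1 + cℓ/s`
decreases in `s`. As `s → 0` it is below a geometric series of ratio `dλs/c → 0`, while as
`s → ∞` its partial sums tend to those of `∑ (dλ)^x`, which eventually exceed
`∑ λ^x = λ/(1-λ)` since `dλ > λ`. The intermediate value theorem and strict monotonicity give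
existence and uniqueness.
-/

open scoped BigOperators

open Filter Finset Topology
open scoped Nat

lemma prod_Icc_mul_natCast (a : ℝ) (n : ℕ) : ∏ l ∈ Icc 1 n, (a * l) = a ^ n * n ! := by
  rw [prod_mul_distrib, prod_const, Nat.card_Icc, Nat.add_sub_cancel, ← Ico_add_one_right_eq_Icc,
    ← Nat.cast_prod, prod_Ico_id_eq_factorial]

lemma exists_div_one_sub_lt_sum_range_pow {lam r : ℝ} (hlam0 : 0 ≤ lam) (hlam1 : lam < 1)
    (hlr : lam < r) : ∃ N, lam / (1 - lam) < ∑ x ∈ range N, r ^ (x + 1) := by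
  have hgeom :
      Tendsto (fun N ↦ ∑ x ∈ range N, lam ^ (x + 1)) atTop (𝓝 (lam / (1 - lam))) := by
    have := (hasSum_geometric_of_lt_one hlam0 hlam1).mul_left lam
    simp only [← pow_succ', ← div_eq_mul_inv] at this
    exact this.tendsto_sum_nat
  obtain ⟨N, hN, hlt⟩ := ((eventually_ge_atTop 1).and
    (hgeom.eventually (eventually_gt_nhds (sub_lt_self _ (sub_pos.2 hlr))))).exists
  refine ⟨N, ?_⟩
  -- the first term alone makes up the difference `r - λ`
  have hfirst : r ^ (0 + 1) - lam ^ (0 + 1) ≤ ∑ x ∈ range N, (r ^ (x + 1) - lam ^ (x + 1)) :=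
    single_le_sum (f := fun x ↦ r ^ (x + 1) - lam ^ (x + 1))
      (fun x _ ↦ sub_nonneg.2 (pow_le_pow_left₀ hlam0 hlr.le _)) (mem_range.2 hN)
  rw [sum_sub_distrib, zero_add, pow_one, pow_one] at hfirst
  linarith

namespace F

noncomputable def term (r c s : ℝ) (x : ℕ) : ℝ :=
  r ^ (x + 1) / ∏ l ∈ Icc 1 (x + 1), (1 + c * l / s)

noncomputable def series (r c s : ℝ) : ℝ := ∑' x, term r c s x

theorem eq_series (lam : ℝ) (d : ℕ) : F lam d = series (d * lam) (lam * (d - 1)) := rfl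

variable {r c s : ℝ}

lemma prod_one_add_pos (hc : 0 ≤ c) (hs : 0 ≤ s) (n : ℕ) :
    0 < ∏ l ∈ Icc 1 n, (1 + c * l / s) :=
  Finset.prod_pos fun _ _ ↦ by positivity

lemma term_nonneg (hr : 0 ≤ r) (hc : 0 ≤ c) (hs : 0 ≤ s) (x : ℕ) : 0 ≤ term r c s x :=
  div_nonneg (pow_nonneg hr _) (prod_one_add_pos hc hs _).le

lemma term_le_pow_div_factorial (hr : 0 ≤ r) (hc : 0 < c) (hs : 0 < s) (x : ℕ) :
    term r c s x ≤ (r * s / c) ^ (x + 1) / (x + 1)! := by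
  have hlow : ∏ l ∈ Icc 1 (x + 1), (c / s * l) ≤ ∏ l ∈ Icc 1 (x + 1), (1 + c * l / s) :=
    prod_le_prod (fun _ _ ↦ by positivity) fun l _ ↦ by rw [div_mul_eq_mul_div]; linarith
  rw [prod_Icc_mul_natCast] at hlow
  calc term r c s x ≤ r ^ (x + 1) / ((c / s) ^ (x + 1) * (x + 1)!) :=
        div_le_div_of_nonneg_left (by positivity) (by positivity) hlow
    _ = (r * s / c) ^ (x + 1) / (x + 1)! := by
        rw [← div_div, ← div_pow, div_div_eq_mul_div]

lemma summable_term (hr : 0 ≤ r) (hc : 0 < c) (hs : 0 < s) : Summable (term r c s) :=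
  .of_nonneg_of_le (term_nonneg hr hc.le hs.le) (term_le_pow_div_factorial hr hc hs)
    ((Real.summable_pow_div_factorial _).comp_injective (add_left_injective 1))

lemma series_le_geometric (hr : 0 ≤ r) (hc : 0 < c) (hs : 0 < s) (hq : r * s / c < 1) :
    series r c s ≤ r * s / c / (1 - r * s / c) := by
  set q := r * s / c
  have hgeom : HasSum (fun x : ℕ ↦ q ^ (x + 1)) (q / (1 - q)) := by
    have := (hasSum_geometric_of_lt_one (by positivity) hq).mul_left q
    simpa only [← pow_succ', ← div_eq_mul_inv] using this
  refine hasSum_le (fun x ↦ ?_) (summable_term hr hc hs).hasSum hgeom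
  exact (term_le_pow_div_factorial hr hc hs x).trans
    (div_le_self (by positivity) (by exact_mod_cast (x + 1).factorial_pos))

lemma exists_series_lt (hr : 0 < r) (hc : 0 < c) {y : ℝ} (hy : 0 < y) :
    ∃ s, 0 < s ∧ series r c s < y := by
  -- with `q := r s / c = y / (y + 2)` the geometric bound is `q / (1 - q) = y / 2`
  refine ⟨y / (y + 2) * c / r, by positivity, ?_⟩
  have hq : r * (y / (y + 2) * c / r) / c = y / (y + 2) := by field_simp
  have hbound := series_le_geometric (s := y / (y + 2) * c / r) hr.le hc (by positivity)
    (by rw [hq, div_lt_one] <;> linarith)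
  rw [hq] at hbound
  calc _ ≤ _ := hbound
    _ = y / 2 := by field_simp; ring
    _ < y := by linarith

lemma term_strictMonoOn (hr : 0 < r) (hc : 0 < c) (x : ℕ) :
    StrictMonoOn (fun s ↦ term r c s x) (Set.Ioi 0) := by
  intro s₁ (hs₁ : 0 < s₁) s₂ (hs₂ : 0 < s₂) hlt
  refine div_lt_div_of_pos_left (pow_pos hr _) (prod_one_add_pos hc.le hs₂.le _) ?_
  refine prod_lt_prod_of_nonempty (fun _ _ ↦ by positivity) (fun l hl ↦ ?_) (nonempty_Icc.2 ?_)
  · have hl : (0 : ℝ) < l := by exact_mod_cast (mem_Icc.1 hl).1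
    gcongr
  · omega

lemma strictMonoOn_series (hr : 0 < r) (hc : 0 < c) : StrictMonoOn (series r c) (Set.Ioi 0) :=
  fun _ hs₁ _ hs₂ hlt ↦ Summable.tsum_lt_tsum_of_nonneg (i := 0)
    (term_nonneg hr.le hc.le hs₁.le) (fun x ↦ (term_strictMonoOn hr hc x hs₁ hs₂ hlt).le)
    (term_strictMonoOn hr hc 0 hs₁ hs₂ hlt) (summable_term hr.le hc hs₂)

lemma continuousOn_term (hc : 0 ≤ c) (x : ℕ) :
    ContinuousOn (fun s ↦ term r c s x) (Set.Ioi 0) :=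
  continuousOn_const.div (continuousOn_finsetProd _ fun _ _ ↦ continuousOn_const.add
      (continuousOn_const.div continuousOn_id fun _ hs ↦ hs.out.ne'))
    fun _ hs ↦ (prod_one_add_pos hc hs.out.le _).ne'

lemma continuousOn_series (hr : 0 < r) (hc : 0 < c) :
    ContinuousOn (series r c) (Set.Ioi 0) := by
  intro s₀ (hs₀ : 0 < s₀)
  have hIcc : Set.Icc (s₀ / 2) (2 * s₀) ⊆ Set.Ioi 0 :=
    fun s hs ↦ lt_of_lt_of_le (by positivity) hs.1
  -- on `[s₀/2, 2s₀]` the terms are dominated by their values at the right endpoint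
  have hloc : ContinuousOn (series r c) (Set.Icc (s₀ / 2) (2 * s₀)) :=
    continuousOn_tsum (fun x ↦ (continuousOn_term hc.le x).mono hIcc)
      (summable_term (s := 2 * s₀) hr.le hc (by positivity)) fun x s hs ↦ by
        rw [Real.norm_of_nonneg (term_nonneg hr.le hc.le (hIcc hs).out.le x)]
        exact (term_strictMonoOn hr hc x).monotoneOn (hIcc hs)
          (show (0 : ℝ) < 2 * s₀ by positivity) hs.2
  exact (hloc.continuousAt (Icc_mem_nhds (by linarith) (by linarith))).continuousWithinAt

lemma tendsto_term_atTop (r c : ℝ) (x : ℕ) :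
    Tendsto (fun s ↦ term r c s x) atTop (𝓝 (r ^ (x + 1))) := by
  have hprod : Tendsto (fun s ↦ ∏ l ∈ Icc 1 (x + 1), (1 + c * l / s)) atTop (𝓝 1) := by
    simpa using tendsto_finsetProd (Icc 1 (x + 1)) fun l _ ↦
      (tendsto_const_nhds (x := (1 : ℝ))).add
        ((tendsto_const_nhds (x := c * l)).div_atTop tendsto_id)
  simpa [term, Pi.div_def] using tendsto_const_nhds.div hprod one_ne_zero

lemma eventually_lt_series (hr : 0 ≤ r) (hc : 0 < c) {y : ℝ} {N : ℕ}
    (hy : y < ∑ x ∈ range N, r ^ (x + 1)) : ∀ᶠ s in atTop, y < series r c s := by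
  have hpartial : Tendsto (fun s ↦ ∑ x ∈ range N, term r c s x) atTop
      (𝓝 (∑ x ∈ range N, r ^ (x + 1))) :=
    tendsto_finsetSum _ fun x _ ↦ tendsto_term_atTop r c x
  filter_upwards [hpartial.eventually_const_lt hy, eventually_gt_atTop 0] with s hs hs₀
  exact hs.trans_le <|
    Summable.sum_le_tsum _ (fun x _ ↦ term_nonneg hr hc.le hs₀.le x) (summable_term hr hc hs₀)

end F

theorem F_unique_solution
    (lam : ℝ) (hlam0 : 0 < lam) (hlam1 : lam < 1) (d : ℕ) (hd : 2 ≤ d) :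
    ∃! s : ℝ, 0 < s ∧ F lam d s = lam / (1 - lam) := by
  have hd' : (2 : ℝ) ≤ d := by exact_mod_cast hd
  have hr : 0 < (d : ℝ) * lam := by positivity
  have hc : 0 < lam * ((d : ℝ) - 1) := mul_pos hlam0 (by linarith)
  have hlr : lam < d * lam := by nlinarith
  rw [F.eq_series]
  obtain ⟨a, ha, hFa⟩ := F.exists_series_lt hr hc (div_pos hlam0 (sub_pos.2 hlam1))
  obtain ⟨N, hN⟩ := exists_div_one_sub_lt_sum_range_pow hlam0.le hlam1 hlr
  obtain ⟨b, hab, hFb⟩ :=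
    ((eventually_ge_atTop a).and (F.eventually_lt_series hr.le hc hN)).exists
  have hIcc : Set.Icc a b ⊆ Set.Ioi 0 := fun s hs ↦ ha.trans_le hs.1
  obtain ⟨s, hs, hFs⟩ := intermediate_value_Icc hab
    ((F.continuousOn_series hr hc).mono hIcc) ⟨hFa.le, hFb.le⟩
  exact ⟨s, ⟨hIcc hs, hFs⟩, fun t ht ↦
    (F.strictMonoOn_series hr hc).injOn ht.1 (hIcc hs) (ht.2.trans hFs.symm)⟩
end

section
/- For all reals a > 0 and b > 0, the series ∑_{x≥1} a^x / ∏_{ℓ=1}^{x} (1 + bℓ) converges and its sum equals (a/b)^{−1/b} · e^{a/b} · γ(1 + 1/b, a/b), where γ(s, z) = ∫_0^z t^{s−1} e^{−t} dt denotes the lower incomplete gamma function; that is, ∑_{x≥1} a^x / ∏_{ℓ=1}^{x} (1 + bℓ) = (a/b)^{−1/b} · e^{a/b} · ∫_0^{a/b} t^{1/b} · e^{−t} dt. -/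
/-!
Put `z = a / b`, `c = 1 / b` and `P n = ∏_{l=1}^n (c + l)`, so that the `n`-th term is
`z ^ n / P n`. Integration by parts gives `γ(s + 1, z) = s γ(s, z) - z ^ s e^{-z}`, hence
`u n = γ(c + 1 + n, z) / P n` satisfies `u n - u (n + 1) = z ^ c e^{-z} z ^ (n + 1) / P (n + 1)`
and the series telescopes. As `γ(s, z) ≤ z ^ s` and `P n ≥ n!`, `u n → 0`, so the sum is
`z ^ (-c) e^z u 0 = z ^ (-c) e^z γ(c + 1, z)`.
-/

open Real Filter Topology Finset
open scoped Nat

noncomputable def lowerIncGamma (s z : ℝ) : ℝ :=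
  ∫ t in (0 : ℝ)..z, t ^ (s - 1) * exp (-t)

lemma lowerIncGamma_add_one {s : ℝ} (hs : 1 ≤ s) (z : ℝ) :
    lowerIncGamma (s + 1) z = s * lowerIncGamma s z - z ^ s * exp (-z) := by
  have hderiv : ∀ t ∈ Set.uIcc 0 z, HasDerivAt (fun t : ℝ => t ^ s * exp (-t))
      (s * (t ^ (s - 1) * exp (-t)) - t ^ s * exp (-t)) t := fun t _ => by
    have := (hasDerivAt_rpow_const (x := t) (Or.inr hs)).mul (hasDerivAt_neg t).exp
    exact this.congr_deriv (by ring)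
  have hcont : ∀ p : ℝ, 0 ≤ p → Continuous fun t : ℝ => t ^ p * exp (-t) := fun p hp => by
    fun_prop (disch := exact hp)
  have hint : ∀ p : ℝ, 0 ≤ p →
      IntervalIntegrable (fun t : ℝ => t ^ p * exp (-t)) MeasureTheory.volume 0 z :=
    fun p hp => (hcont p hp).intervalIntegrable 0 z
  have hftc := intervalIntegral.integral_eq_sub_of_hasDerivAt hderiv
    (((hint _ (by linarith)).const_mul s).sub (hint s (by linarith)))
  rw [intervalIntegral.integral_sub ((hint _ (by linarith)).const_mul s) (hint s (by linarith)),
    intervalIntegral.integral_const_mul, zero_rpow (by linarith), zero_mul, sub_zero] at hftc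
  rw [lowerIncGamma, lowerIncGamma, add_sub_cancel_right]
  linarith

lemma lowerIncGamma_nonneg (s : ℝ) {z : ℝ} (hz : 0 ≤ z) : 0 ≤ lowerIncGamma s z :=
  intervalIntegral.integral_nonneg hz fun t ht => by have := ht.1; positivity

lemma lowerIncGamma_le {s : ℝ} (hs : 1 ≤ s) {z : ℝ} (hz : 0 ≤ z) : lowerIncGamma s z ≤ z ^ s := by
  have hcont : Continuous fun t : ℝ => t ^ (s - 1) * exp (-t) := by
    have : 0 ≤ s - 1 := by linarith
    fun_prop (disch := exact this)
  calc lowerIncGamma s z ≤ ∫ _ in (0 : ℝ)..z, z ^ (s - 1) := by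
        refine intervalIntegral.integral_mono_on hz (hcont.intervalIntegrable 0 z)
          intervalIntegrable_const fun t ht => ?_
        calc t ^ (s - 1) * exp (-t) ≤ z ^ (s - 1) * 1 := by
              gcongr
              · exact ht.1
              · exact ht.2
              · exact exp_le_one_iff.2 (by linarith [ht.1])
          _ = z ^ (s - 1) := mul_one _
    _ = z ^ s := by
        rw [intervalIntegral.integral_const, smul_eq_mul, sub_zero, mul_comm,
          ← rpow_add_one' hz (by linarith), sub_add_cancel]

lemma prod_one_add_mul_eq_pow_mul_prod {K : Type*} [Field K] {b : K} (hb : b ≠ 0)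
    (s : Finset ℕ) : ∏ l ∈ s, (1 + b * l) = b ^ #s * ∏ l ∈ s, (b⁻¹ + l) := by
  rw [← prod_const, ← prod_mul_distrib]
  refine prod_congr rfl fun l _ => ?_
  field_simp

lemma factorial_le_prod_Icc_add {R : Type*} [CommSemiring R] [PartialOrder R] [IsOrderedRing R]
    {c : R} (hc : 0 ≤ c) (n : ℕ) : (n ! : R) ≤ ∏ l ∈ Icc 1 n, (c + l) := by
  rw [← Ico_add_one_right_eq_Icc, ← prod_Ico_id_eq_factorial, Nat.cast_prod]
  exact prod_le_prod (fun _ _ => by positivity) fun l _ => le_add_of_nonneg_left hc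

lemma hasSum_sub_succ_of_tendsto {u : ℕ → ℝ} {l : ℝ} (hu : Antitone u)
    (hlim : Tendsto u atTop (𝓝 l)) : HasSum (fun n => u n - u (n + 1)) (u 0 - l) := by
  rw [hasSum_iff_tendsto_nat_of_nonneg fun n => sub_nonneg.2 (hu n.le_succ)]
  simpa only [sum_range_sub'] using tendsto_const_nhds.sub hlim

lemma tendsto_lowerIncGamma_div_prod {c z : ℝ} (hc : 0 ≤ c) (hz : 0 ≤ z) :
    Tendsto (fun n : ℕ => lowerIncGamma (c + 1 + n) z / ∏ l ∈ Icc 1 n, (c + l)) atTop (𝓝 0) := by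
  have hmaj := (FloorSemiring.tendsto_pow_div_factorial_atTop z).const_mul (z ^ (c + 1))
  rw [mul_zero] at hmaj
  refine squeeze_zero (fun n => div_nonneg (lowerIncGamma_nonneg _ hz) (by positivity))
    (fun n => ?_) hmaj
  calc _ ≤ z ^ (c + 1 + n) / n ! :=
        div_le_div₀ (by positivity) (lowerIncGamma_le (by linarith [n.cast_nonneg (α := ℝ)]) hz)
          (by positivity) (factorial_le_prod_Icc_add hc n)
    _ = z ^ (c + 1) * (z ^ n / n !) := by
        rw [rpow_add' hz (by positivity), rpow_natCast, mul_div_assoc]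

lemma lowerIncGamma_div_prod_sub_succ {c : ℝ} (hc : 0 ≤ c) (z : ℝ) (n : ℕ) :
    lowerIncGamma (c + 1 + n) z / ∏ l ∈ Icc 1 n, (c + l)
      - lowerIncGamma (c + 1 + (n + 1 : ℕ)) z / ∏ l ∈ Icc 1 (n + 1), (c + l)
      = z ^ (c + 1 + n) * exp (-z) / ∏ l ∈ Icc 1 (n + 1), (c + l) := by
  have hP : 0 < ∏ l ∈ Icc 1 n, (c + l) := prod_pos fun l hl =>
    add_pos_of_nonneg_of_pos hc (Nat.cast_pos.2 (mem_Icc.1 hl).1)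
  rw [Nat.cast_succ, ← add_assoc, lowerIncGamma_add_one (by linarith [n.cast_nonneg (α := ℝ)]),
    prod_Icc_succ_top (by omega)]
  field_simp
  push_cast
  ring

theorem sum_eq_lower_incomplete_gamma (a b : ℝ) (ha : 0 < a) (hb : 0 < b) :
    Summable (fun x : ℕ => a ^ (x + 1) /
      ∏ l ∈ Finset.Icc 1 (x + 1), (1 + b * (l : ℝ))) ∧
    (∑' x : ℕ, a ^ (x + 1) / ∏ l ∈ Finset.Icc 1 (x + 1), (1 + b * (l : ℝ))) =
      (a / b) ^ (-(1 / b)) * Real.exp (a / b) *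
        ∫ t in (0 : ℝ)..(a / b), t ^ (1 / b) * Real.exp (-t) := by
  rw [one_div]
  set z := a / b
  set c := b⁻¹
  have hz : 0 < z := div_pos ha hb
  have hc : 0 ≤ c := inv_nonneg.2 hb.le
  set u : ℕ → ℝ := fun n => lowerIncGamma (c + 1 + n) z / ∏ l ∈ Icc 1 n, (c + l)
  have hdiff : ∀ n : ℕ, u n - u (n + 1) =
      z ^ (c + 1 + n) * exp (-z) / ∏ l ∈ Icc 1 (n + 1), (c + l) :=
    lowerIncGamma_div_prod_sub_succ hc z
  have hterm : ∀ n : ℕ, a ^ (n + 1) / ∏ l ∈ Icc 1 (n + 1), (1 + b * (l : ℝ)) =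
      (z ^ c * exp (-z))⁻¹ * (u n - u (n + 1)) := fun n => by
    rw [hdiff, prod_one_add_mul_eq_pow_mul_prod hb.ne', Nat.card_Icc, add_tsub_cancel_right,
      rpow_add hz, rpow_add hz, rpow_one, rpow_natCast]
    simp only [z, c, div_pow]
    field_simp
    ring
  have hanti : Antitone u :=
    antitone_nat_of_succ_le fun n => sub_nonneg.1 (by rw [hdiff]; positivity)
  have hsum := (hasSum_sub_succ_of_tendsto hanti
    (tendsto_lowerIncGamma_div_prod hc hz.le)).mul_left (z ^ c * exp (-z))⁻¹
  rw [← funext hterm] at hsum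
  refine ⟨hsum.summable, hsum.tsum_eq.trans ?_⟩
  simp only [u]
  rw [Nat.cast_zero, add_zero, lowerIncGamma, add_sub_cancel_right, Icc_eq_empty (by omega),
    prod_empty, div_one, sub_zero, rpow_neg hz.le, exp_neg z, mul_inv, inv_inv]
end

section
/- Let 0 < λ < 1 and let π be an admissible pair configuration. Then the double series ∑_{x≥1} ∑_{y≥1} R(x,y) converges absolutely and ∑_{x≥1} ∑_{y≥1} R(x,y) = λ − 2·∑_{x≥1} π(x)/x. -/
open scoped BigOperators

/-- `π(x) = ∑_{y≥1} π(x,y)`, the row sum of a pair configuration. -/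
noncomputable def rowSum (p : ℕ → ℕ → ℝ) (x : ℕ) : ℝ := ∑' y : ℕ, p x (y + 1)

/-- An admissible pair configuration: nonnegative, symmetric, vanishing when an
index is `0` (the boundary convention), with finite first moment and positive
row sums. -/
def AdmissiblePair (p : ℕ → ℕ → ℝ) : Prop :=
  (∀ x y, 0 ≤ p x y) ∧ (∀ x y, p x y = p y x) ∧
    (∀ y, p 0 y = 0) ∧ (∀ x, p x 0 = 0) ∧
    Summable (fun xy : ℕ × ℕ => ((xy.1 : ℝ) + 1) * p (xy.1 + 1) (xy.2 + 1)) ∧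
    (∀ x : ℕ, 1 ≤ x → 0 < rowSum p x)

/-- `h(x) = (x−1)·∑_{y≥1} π(x,y)/(y·π(x))`. -/
noncomputable def hPS (p : ℕ → ℕ → ℝ) (x : ℕ) : ℝ :=
  ((x : ℝ) - 1) * ∑' y : ℕ, p x (y + 1) / (((y : ℝ) + 1) * rowSum p x)

/-- `q(x) = 2π(x)/x` for `x ≥ 1` and `q(0) = 1 − ∑_{x≥1} q(x)`. -/
noncomputable def qPS (p : ℕ → ℕ → ℝ) (x : ℕ) : ℝ :=
  if x = 0 then 1 - ∑' z : ℕ, 2 * rowSum p (z + 1) / ((z : ℝ) + 1)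
  else 2 * rowSum p x / (x : ℝ)

/-- The PS pair drift `R(x,y)`, for `x, y ≥ 1`. -/
noncomputable def RPS (lam : ℝ) (p : ℕ → ℕ → ℝ) (x y : ℕ) : ℝ :=
  lam * qPS p (x - 1) * qPS p (y - 1)
    + 2 * lam * (p (x - 1) y + p x (y - 1) - 2 * p x y)
    + p (x + 1) y * (hPS p (x + 1) + (x : ℝ) / ((x : ℝ) + 1))
    + p x (y + 1) * (hPS p (y + 1) + (y : ℝ) / ((y : ℝ) + 1))
    - p x y * (2 + hPS p x + hPS p y)


/-!
Pointwise, `R(x,y) = λ q(x-1) q(y-1) + T(x,y) + T(y,x)`, where `T` (`rowDrift`) collects the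
moves of the first coordinate; symmetry of `π` turns the moves of the second coordinate into
`T(y,x)`. The first part sums to `λ` because `∑ q = 1`. Since `(x-1)/x + 1/x = 1`,
`T(x,y) = Φ(x+1,y) - Φ(x,y) - π(x,y)/x` for the flux `Φ(x,y) = π(x,y)(h(x) + (x-1)/x) - 2λ π(x-1,y)`
(`rowFlux`), which vanishes at `x = 1` and is summable because `0 ≤ h(x) ≤ x - 1` and `π` has a
finite first moment. So `T` telescopes to `-∑ π(x)/x`.
-/

section Shift

variable {α : Type*} [AddCommGroup α] [TopologicalSpace α]

theorem hasSum_comp_succ_fst_iff {f : ℕ × ℕ → α} {a : α} (h0 : ∀ y, f (0, y) = 0) :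
    HasSum (fun xy : ℕ × ℕ => f (xy.1 + 1, xy.2)) a ↔ HasSum f a := by
  refine (Nat.succ_injective.prodMap Function.injective_id).hasSum_iff ?_
  rintro ⟨_ | x, y⟩ hxy
  · exact h0 y
  · exact absurd ⟨(x, y), rfl⟩ hxy

theorem HasSum.sub_comp_succ_fst [IsTopologicalAddGroup α] {f : ℕ × ℕ → α} {a : α}
    (hf : HasSum f a) (h0 : ∀ y, f (0, y) = 0) :
    HasSum (fun xy : ℕ × ℕ => f (xy.1 + 1, xy.2) - f xy) 0 := by
  simpa using ((hasSum_comp_succ_fst_iff h0).2 hf).sub hf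

end Shift

theorem HasSum.mul_prod_self {ι : Type*} {q : ι → ℝ} {s : ℝ} (hq : HasSum q s) :
    HasSum (fun ij : ι × ι => q ij.1 * q ij.2) (s * s) := by
  have hnorm : Summable fun x => ‖q x‖ := hq.summable.norm
  exact hq.mul hq (summable_mul_of_summable_norm hnorm hnorm)

theorem tsum_div_succ_mul_tsum_le_one {a : ℕ → ℝ} (ha : ∀ n, 0 ≤ a n) (hs : Summable a) :
    ∑' n : ℕ, a n / (((n : ℝ) + 1) * ∑' m, a m) ≤ 1 := by
  have hle : ∀ n : ℕ, a n / (((n : ℝ) + 1) * ∑' m, a m) ≤ a n / ∑' m, a m := fun n => by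
    rw [mul_comm, ← div_div]
    exact div_le_self (div_nonneg (ha n) (tsum_nonneg ha)) (by simp)
  have hsum : Summable fun n : ℕ => a n / (((n : ℝ) + 1) * ∑' m, a m) :=
    (hs.div_const _).of_nonneg_of_le
      (fun n => div_nonneg (ha n) (mul_nonneg (by positivity) (tsum_nonneg ha))) hle
  calc ∑' n : ℕ, a n / (((n : ℝ) + 1) * ∑' m, a m)
      ≤ ∑' n, a n / ∑' m, a m := hsum.tsum_le_tsum hle (hs.div_const _)
    _ = (∑' n, a n) / ∑' m, a m := tsum_div_const
    _ ≤ 1 := div_self_le_one _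

section PairConfiguration

variable {p : ℕ → ℕ → ℝ}

theorem summable_succ_succ_of_summable_moment (hnn : ∀ x y, 0 ≤ p x y)
    (hM : Summable fun xy : ℕ × ℕ => ((xy.1 : ℝ) + 1) * p (xy.1 + 1) (xy.2 + 1)) :
    Summable fun xy : ℕ × ℕ => p (xy.1 + 1) (xy.2 + 1) :=
  hM.of_nonneg_of_le (fun _ => hnn _ _) fun xy =>
    le_mul_of_one_le_left (hnn _ _) (by simp)

theorem summable_succ_succ_div (hnn : ∀ x y, 0 ≤ p x y)
    (hP : Summable fun xy : ℕ × ℕ => p (xy.1 + 1) (xy.2 + 1)) :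
    Summable fun xy : ℕ × ℕ => p (xy.1 + 1) (xy.2 + 1) / ((xy.1 : ℝ) + 1) :=
  hP.of_nonneg_of_le (fun _ => div_nonneg (hnn _ _) (by positivity)) fun _ =>
    div_le_self (hnn _ _) (by simp)

theorem hasSum_rowSum_succ_div (hnn : ∀ x y, 0 ≤ p x y)
    (hP : Summable fun xy : ℕ × ℕ => p (xy.1 + 1) (xy.2 + 1)) :
    HasSum (fun x : ℕ => rowSum p (x + 1) / ((x : ℝ) + 1))
      (∑' xy : ℕ × ℕ, p (xy.1 + 1) (xy.2 + 1) / ((xy.1 : ℝ) + 1)) :=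
  (summable_succ_succ_div hnn hP).hasSum.prod_fiberwise fun x =>
    (hP.prod_factor x).hasSum.div_const _

theorem hasSum_qPS (hs : Summable fun z : ℕ => 2 * rowSum p (z + 1) / ((z : ℝ) + 1)) :
    HasSum (qPS p) 1 := by
  have htail : HasSum (fun n => qPS p (n + 1))
      (∑' z : ℕ, 2 * rowSum p (z + 1) / ((z : ℝ) + 1)) := by
    convert hs.hasSum using 2 with n
    simp [qPS]
  simpa [qPS] using htail.zero_add

theorem hPS_one : hPS p 1 = 0 := by
  simp [hPS]

theorem hPS_succ_nonneg (hnn : ∀ x y, 0 ≤ p x y) (x : ℕ) : 0 ≤ hPS p (x + 1) := by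
  unfold hPS
  push_cast
  refine mul_nonneg (by simp) (tsum_nonneg fun y => div_nonneg (hnn _ _) ?_)
  exact mul_nonneg (by positivity) (tsum_nonneg fun _ => hnn _ _)

theorem hPS_succ_le (hnn : ∀ x y, 0 ≤ p x y) {x : ℕ}
    (hrow : Summable fun y : ℕ => p (x + 1) (y + 1)) : hPS p (x + 1) ≤ x := by
  unfold hPS rowSum
  push_cast
  rw [add_sub_cancel_right]
  exact mul_le_of_le_one_right (Nat.cast_nonneg x)
    (tsum_div_succ_mul_tsum_le_one (fun _ => hnn _ _) hrow)

end PairConfiguration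

noncomputable def rowDrift (lam : ℝ) (p : ℕ → ℕ → ℝ) (x y : ℕ) : ℝ :=
  2 * lam * (p (x - 1) y - p x y)
    + p (x + 1) y * (hPS p (x + 1) + (x : ℝ) / ((x : ℝ) + 1))
    - p x y * (1 + hPS p x)

noncomputable def rowFlux (lam : ℝ) (p : ℕ → ℕ → ℝ) (x y : ℕ) : ℝ :=
  p x y * (hPS p x + ((x : ℝ) - 1) / x) - 2 * lam * p (x - 1) y

section Drift

variable {lam : ℝ} {p : ℕ → ℕ → ℝ}

theorem RPS_eq_add_rowDrift (hsym : ∀ x y, p x y = p y x) (x y : ℕ) :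
    RPS lam p x y =
      lam * qPS p (x - 1) * qPS p (y - 1) + rowDrift lam p x y + rowDrift lam p y x := by
  simp only [RPS, rowDrift]
  rw [hsym (y - 1), hsym y x, hsym (y + 1)]
  ring

theorem rowDrift_succ_eq (x y : ℕ) :
    rowDrift lam p (x + 1) y =
      rowFlux lam p (x + 2) y - rowFlux lam p (x + 1) y - p (x + 1) y / ((x : ℝ) + 1) := by
  simp only [rowDrift, rowFlux, Nat.add_sub_cancel]
  push_cast
  field_simp
  ring

theorem rowFlux_one (h0 : ∀ y, p 0 y = 0) (y : ℕ) : rowFlux lam p 1 y = 0 := by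
  simp [rowFlux, hPS_one, h0]

theorem summable_rowFlux (hnn : ∀ x y, 0 ≤ p x y) (h0 : ∀ y, p 0 y = 0)
    (hM : Summable fun xy : ℕ × ℕ => ((xy.1 : ℝ) + 1) * p (xy.1 + 1) (xy.2 + 1)) :
    Summable fun xy : ℕ × ℕ => rowFlux lam p (xy.1 + 1) (xy.2 + 1) := by
  have hP := summable_succ_succ_of_summable_moment hnn hM
  have hbounds : ∀ xy : ℕ × ℕ,
      0 ≤ p (xy.1 + 1) (xy.2 + 1) * (hPS p (xy.1 + 1) + (xy.1 : ℝ) / ((xy.1 : ℝ) + 1)) ∧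
      p (xy.1 + 1) (xy.2 + 1) * (hPS p (xy.1 + 1) + (xy.1 : ℝ) / ((xy.1 : ℝ) + 1))
        ≤ ((xy.1 : ℝ) + 1) * p (xy.1 + 1) (xy.2 + 1) := fun ⟨x, y⟩ => by
    have hh0 := hPS_succ_nonneg hnn x
    have hh1 := hPS_succ_le hnn (hP.prod_factor x)
    have hfrac : (x : ℝ) / ((x : ℝ) + 1) ≤ 1 := div_le_one_of_le₀ (by simp) (by positivity)
    constructor
    · exact mul_nonneg (hnn _ _) (add_nonneg hh0 (by positivity))
    · rw [mul_comm]
      exact mul_le_mul_of_nonneg_right (by linarith) (hnn _ _)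
  have hflux : Summable fun xy : ℕ × ℕ =>
      p (xy.1 + 1) (xy.2 + 1) * (hPS p (xy.1 + 1) + (xy.1 : ℝ) / ((xy.1 : ℝ) + 1)) :=
    hM.of_nonneg_of_le (fun xy => (hbounds xy).1) fun xy => (hbounds xy).2
  have hshift : Summable fun xy : ℕ × ℕ => p xy.1 (xy.2 + 1) :=
    ((hasSum_comp_succ_fst_iff (f := fun xy : ℕ × ℕ => p xy.1 (xy.2 + 1))
      fun y => h0 (y + 1)).1 hP.hasSum).summable
  refine (hflux.sub (hshift.mul_left (2 * lam))).congr fun xy => ?_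
  simp [rowFlux]

theorem hasSum_rowDrift (hnn : ∀ x y, 0 ≤ p x y) (h0 : ∀ y, p 0 y = 0)
    (hM : Summable fun xy : ℕ × ℕ => ((xy.1 : ℝ) + 1) * p (xy.1 + 1) (xy.2 + 1)) :
    HasSum (fun xy : ℕ × ℕ => rowDrift lam p (xy.1 + 1) (xy.2 + 1))
      (-∑' x : ℕ, rowSum p (x + 1) / ((x : ℝ) + 1)) := by
  have hP := summable_succ_succ_of_summable_moment hnn hM
  have htelescope := (summable_rowFlux (lam := lam) hnn h0 hM).hasSum.sub_comp_succ_fst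
    fun y => rowFlux_one h0 (y + 1)
  have hdiv := (summable_succ_succ_div hnn hP).hasSum
  rw [← (hasSum_rowSum_succ_div hnn hP).tsum_eq] at hdiv
  simpa only [zero_sub, rowDrift_succ_eq] using htelescope.sub hdiv

end Drift

theorem ps_pair_drift_total_sum_general
    (lam : ℝ)
    (p : ℕ → ℕ → ℝ) (hp : AdmissiblePair p) :
    Summable (fun xy : ℕ × ℕ => |RPS lam p (xy.1 + 1) (xy.2 + 1)|) ∧
    (∑' xy : ℕ × ℕ, RPS lam p (xy.1 + 1) (xy.2 + 1)) =
      lam - 2 * ∑' x : ℕ, rowSum p (x + 1) / ((x : ℝ) + 1) := by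
  obtain ⟨hnn, hsym, h0, -, hM, -⟩ := hp
  have hP := summable_succ_succ_of_summable_moment hnn hM
  have hq : HasSum (qPS p) 1 := by
    refine hasSum_qPS ?_
    simpa only [mul_div_assoc] using (hasSum_rowSum_succ_div hnn hP).summable.mul_left 2
  have hrow := hasSum_rowDrift (lam := lam) hnn h0 hM
  have hcol : HasSum (fun xy : ℕ × ℕ => rowDrift lam p (xy.2 + 1) (xy.1 + 1)) _ :=
    (Equiv.prodComm ℕ ℕ).hasSum_iff.2 hrow
  have hsum := ((hq.mul_prod_self.mul_left lam).add hrow).add hcol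
  rw [show ∀ S : ℝ, lam * (1 * 1) + -S + -S = lam - 2 * S from fun S => by ring] at hsum
  have hR : HasSum (fun xy : ℕ × ℕ => RPS lam p (xy.1 + 1) (xy.2 + 1))
      (lam - 2 * ∑' x : ℕ, rowSum p (x + 1) / ((x : ℝ) + 1)) :=
    hsum.congr_fun fun xy => by
      rw [RPS_eq_add_rowDrift hsym, Nat.add_sub_cancel, Nat.add_sub_cancel, mul_assoc]
  exact ⟨hR.summable.abs, hR.tsum_eq⟩

theorem ps_pair_drift_total_sum
    (lam : ℝ) (hlam0 : 0 < lam) (hlam1 : lam < 1)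
    (p : ℕ → ℕ → ℝ) (hp : AdmissiblePair p) :
    Summable (fun xy : ℕ × ℕ => |RPS lam p (xy.1 + 1) (xy.2 + 1)|) ∧
    (∑' xy : ℕ × ℕ, RPS lam p (xy.1 + 1) (xy.2 + 1)) =
      lam - 2 * ∑' x : ℕ, rowSum p (x + 1) / ((x : ℝ) + 1) :=
  ps_pair_drift_total_sum_general lam p hp
end
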